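/- Let n, N ≥ 1, let λ_1,…,λ_n > 0 with Σ_k λ_k = 1, let ρ := diag(λ_1,…,λ_n), and let A_1,…,A_N be Hermitian n×n complex matrices. Let m, m' : (0,∞)×(0,∞) → ℝ satisfy 0 < m(x,y) ≤ m'(x,y) ≤ (x+y)/2 for all x,y > 0. Then det G(m') ≤ det G(m). (In the paper's notation: if f̃ ≤ g̃, equivalently m_{f̃} ≤ m_{g̃}, then V(f) ≥ V(g), where V(f) = (f(0)/2)^{N/2} Vol_ρ^f(i[ρ,A_1],…,i[ρ,A_N]).) -/

import Mathlib

/-!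
Write `B_h := (A_h)₀`. Since the `B_h` are Hermitian and `ρ` is diagonal, `Cov_{hj}` can be
symmetrised to `Σ_{k,l} (λ_k + λ_l)/2 · Re((B_h)_{kl} conj (B_j)_{kl})`. Hence
`G(m) = Σ_{k,l} ((λ_k + λ_l)/2 - m(λ_k, λ_l)) · Gram((B_h)_{kl})_h` is a nonnegative combination
of real Gram matrices, and so is `G(m) - G(m') = Σ_{k,l} (m' - m)(λ_k, λ_l) · Gram((B_h)_{kl})_h`.
It remains to see that the determinant is monotone in the Loewner order: if `0 ≤ A ≤ B = X* X`
with `X` invertible, then `0 ≤ X⁻* A X⁻¹ ≤ 1`, so `det A / det B = det (X⁻* A X⁻¹) ≤ 1`.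
-/

open Matrix ComplexConjugate

namespace Matrix

section Hermitian

variable {𝕜 n : Type*} [RCLike 𝕜] [Fintype n]

lemma IsHermitian.star_trace_mul {ρ A : Matrix n n 𝕜} (hρ : ρ.IsHermitian)
    (hA : A.IsHermitian) : star (trace (ρ * A)) = trace (ρ * A) := by
  rw [← trace_conjTranspose, conjTranspose_mul, hρ.eq, hA.eq, trace_mul_comm]

variable [DecidableEq n]

open scoped ComplexOrder

lemma IsHermitian.eigenvalues_le_one {M : Matrix n n 𝕜} (hM : M.IsHermitian)
    (h1 : (1 - M).PosSemidef) (i : n) : hM.eigenvalues i ≤ 1 := by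
  set v := hM.eigenvectorBasis i
  have hv : star ⇑v ⬝ᵥ ⇑v = 1 := by
    rw [dotProduct_comm, ← EuclideanSpace.inner_eq_star_dotProduct, inner_self_eq_norm_sq_to_K,
      hM.eigenvectorBasis.orthonormal.1 i]
    simp
  have h := RCLike.nonneg_iff.mp (h1.dotProduct_mulVec_nonneg v)
  rw [sub_mulVec, one_mulVec, dotProduct_sub, hv, map_sub, RCLike.one_re,
    ← hM.eigenvalues_eq i] at h
  linarith [h.1]

lemma PosSemidef.det_le_one {M : Matrix n n 𝕜} (hM : M.PosSemidef)
    (h1 : (1 - M).PosSemidef) : M.det ≤ 1 := by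
  rw [hM.isHermitian.det_eq_prod_eigenvalues, ← RCLike.ofReal_prod, ← RCLike.ofReal_one,
    RCLike.ofReal_le_ofReal]
  exact Finset.prod_le_one (fun i _ ↦ hM.eigenvalues_nonneg i)
    fun i _ ↦ hM.isHermitian.eigenvalues_le_one h1 i

lemma PosSemidef.det_eq_zero_of_le {A B : Matrix n n 𝕜} (hA : A.PosSemidef)
    (hAB : (B - A).PosSemidef) (hB : B.det = 0) : A.det = 0 := by
  obtain ⟨v, hv, hBv⟩ := exists_mulVec_eq_zero_iff.mpr hB
  have hsum : star v ⬝ᵥ A *ᵥ v + star v ⬝ᵥ (B - A) *ᵥ v = 0 := by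
    rw [← dotProduct_add, ← add_mulVec, add_sub_cancel, hBv, dotProduct_zero]
  have hAv : star v ⬝ᵥ A *ᵥ v = 0 := ((add_eq_zero_iff_of_nonneg
    (hA.dotProduct_mulVec_nonneg v) (hAB.dotProduct_mulVec_nonneg v)).mp hsum).1
  exact exists_mulVec_eq_zero_iff.mp ⟨v, hv, (hA.dotProduct_mulVec_zero_iff v).mp hAv⟩

open scoped MatrixOrder in
theorem PosSemidef.det_le_det {A B : Matrix n n 𝕜} (hA : A.PosSemidef)
    (hAB : (B - A).PosSemidef) : A.det ≤ B.det := by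
  have hB : B.PosSemidef := by simpa using hA.add hAB
  by_cases hdet : B.det = 0
  · rw [hA.det_eq_zero_of_le hAB hdet, hdet]
  obtain ⟨X, rfl⟩ := CStarAlgebra.nonneg_iff_eq_star_mul_self.mp hB.nonneg
  have hX : IsUnit X.det := by
    rw [det_mul, star_eq_conjTranspose, det_conjTranspose] at hdet
    exact isUnit_iff_ne_zero.mpr (right_ne_zero_of_mul hdet)
  set Y := X⁻¹
  have hXY : X * Y = 1 := mul_nonsing_inv X hX
  have hM : (Yᴴ * A * Y).PosSemidef := hA.conjTranspose_mul_mul_same Y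
  have h1 : (1 - Yᴴ * A * Y).PosSemidef := by
    have hYX : Yᴴ * star X = 1 := by
      rw [star_eq_conjTranspose, ← conjTranspose_mul, hXY, conjTranspose_one]
    convert hAB.conjTranspose_mul_mul_same Y using 1
    rw [mul_sub, sub_mul, ← hYX]
    simp only [Matrix.mul_assoc, hXY, Matrix.mul_one]
  have hA_eq : A.det = (Yᴴ * A * Y).det * (star X * X).det := by
    have hdXY : X.det * Y.det = 1 := by rw [← det_mul, hXY, det_one]
    simp only [det_mul, det_conjTranspose, star_eq_conjTranspose]
    calc A.det = A.det * (X.det * Y.det) * star (X.det * Y.det) := by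
          rw [hdXY, star_one, mul_one, mul_one]
      _ = _ := by rw [star_mul']; ring
  rw [hA_eq]
  exact mul_le_of_le_one_left hB.det_nonneg (hM.det_le_one h1)

end Hermitian

section WeightedGram

variable {ι N : Type*} [Fintype ι]

noncomputable def weightedGram (w : ι → ι → ℝ) (B : N → Matrix ι ι ℂ) : Matrix N N ℝ :=
  ∑ k, ∑ l, w k l • gram ℝ (fun h ↦ B h k l)

lemma weightedGram_apply (w : ι → ι → ℝ) (B : N → Matrix ι ι ℂ) (h j : N) :
    weightedGram w B h j = ∑ k, ∑ l, w k l * (B h k l * conj (B j k l)).re := by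
  simp only [weightedGram, Matrix.sum_apply, Matrix.smul_apply, gram_apply, smul_eq_mul]
  simp only [real_inner_comm (B j _ _), Complex.inner]

lemma weightedGram_sub (w w' : ι → ι → ℝ) (B : N → Matrix ι ι ℂ) :
    weightedGram w B - weightedGram w' B = weightedGram (w - w') B := by
  simp only [weightedGram, Pi.sub_apply, sub_smul, Finset.sum_sub_distrib]

lemma posSemidef_weightedGram [Finite N] {w : ι → ι → ℝ} (hw : ∀ k l, 0 ≤ w k l)
    (B : N → Matrix ι ι ℂ) : (weightedGram w B).PosSemidef :=
  posSemidef_sum _ fun k _ ↦ posSemidef_sum _ fun l _ ↦ (posSemidef_gram ℝ _).smul (hw k l)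

variable [DecidableEq ι]

lemma re_trace_diagonal_mul_mul (d : ι → ℝ) (X : Matrix ι ι ℂ) {Y : Matrix ι ι ℂ}
    (hY : Y.IsHermitian) :
    (trace (diagonal (fun k ↦ (d k : ℂ)) * X * Y)).re =
      ∑ k, ∑ l, d k * (X k l * conj (Y k l)).re := by
  rw [Matrix.mul_assoc, trace]
  simp only [diag_apply, diagonal_mul]
  simp only [mul_apply, Finset.mul_sum, Complex.re_sum, Complex.re_ofReal_mul]
  refine Finset.sum_congr rfl fun k _ ↦ Finset.sum_congr rfl fun l _ ↦ ?_
  rw [← hY.apply l k]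
  rfl

lemma re_trace_diagonal_mul_mul_eq_weightedGram (d : ι → ℝ) {B : N → Matrix ι ι ℂ}
    (hB : ∀ h, (B h).IsHermitian) (h j : N) :
    (trace (diagonal (fun k ↦ (d k : ℂ)) * B h * B j)).re =
      weightedGram (fun k l ↦ (d k + d l) / 2) B h j := by
  have hswap : ∑ k, ∑ l, d k * (B h k l * conj (B j k l)).re =
      ∑ k, ∑ l, d l * (B h k l * conj (B j k l)).re := by
    rw [Finset.sum_comm]
    refine Finset.sum_congr rfl fun k _ ↦ Finset.sum_congr rfl fun l _ ↦ ?_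
    rw [← (hB h).apply, ← (hB j).apply, ← Complex.conj_re]
    simp [mul_comm]
  simp only [weightedGram_apply, re_trace_diagonal_mul_mul d _ (hB j), add_div, add_mul,
    Finset.sum_add_distrib, div_mul_eq_mul_div, ← Finset.sum_div, ← hswap]
  ring

end WeightedGram

end Matrix

theorem det_fisher_antitone_general
    (n N : ℕ)
    (lam : Fin n → ℝ) (hpos : ∀ k, 0 < lam k)
    (A : Fin N → Matrix (Fin n) (Fin n) ℂ) (hA : ∀ h, (A h).IsHermitian)
    (m m' : ℝ → ℝ → ℝ)
    (hm : ∀ x y : ℝ, 0 < x → 0 < y →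
      0 < m x y ∧ m x y ≤ m' x y ∧ m' x y ≤ (x + y) / 2)
    (ρ : Matrix (Fin n) (Fin n) ℂ)
    (hρ : ρ = Matrix.diagonal fun k => (lam k : ℂ))
    (A₀ : Fin N → Matrix (Fin n) (Fin n) ℂ)
    (hA₀ : ∀ h, A₀ h = A h - (Matrix.trace (ρ * A h)) • (1 : Matrix (Fin n) (Fin n) ℂ))
    (Cov : Matrix (Fin N) (Fin N) ℝ)
    (hCov : ∀ h j, Cov h j = (Matrix.trace (ρ * A₀ h * A₀ j)).re)
    (G G' : Matrix (Fin N) (Fin N) ℝ)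
    (hG : ∀ h j, G h j = Cov h j -
      ∑ k, ∑ l, m (lam k) (lam l) * (A₀ h k l * (starRingEnd ℂ) (A₀ j k l)).re)
    (hG' : ∀ h j, G' h j = Cov h j -
      ∑ k, ∑ l, m' (lam k) (lam l) * (A₀ h k l * (starRingEnd ℂ) (A₀ j k l)).re) :
    G'.det ≤ G.det := by
  have hρ_herm : ρ.IsHermitian :=
    hρ ▸ isHermitian_diagonal_of_self_adjoint _ (funext fun k ↦ Complex.conj_ofReal (lam k))
  have hA₀_herm : ∀ h, (A₀ h).IsHermitian := fun h ↦
    hA₀ h ▸ (hA h).sub (IsSelfAdjoint.smul (hρ_herm.star_trace_mul (hA h)) isHermitian_one)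
  have hGram : ∀ (μ : ℝ → ℝ → ℝ) (M : Matrix (Fin N) (Fin N) ℝ),
      (∀ h j, M h j = Cov h j -
        ∑ k, ∑ l, μ (lam k) (lam l) * (A₀ h k l * (starRingEnd ℂ) (A₀ j k l)).re) →
      M = weightedGram (fun k l ↦ (lam k + lam l) / 2) A₀ -
        weightedGram (fun k l ↦ μ (lam k) (lam l)) A₀ := by
    intro μ M hM
    ext h j
    rw [hM, hCov, hρ, re_trace_diagonal_mul_mul_eq_weightedGram _ hA₀_herm, Matrix.sub_apply,
      weightedGram_apply, weightedGram_apply]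
  rw [hGram m G hG, hGram m' G' hG']
  refine PosSemidef.det_le_det ?_ ?_
  · rw [weightedGram_sub]
    refine posSemidef_weightedGram (fun k l ↦ ?_) A₀
    simp only [Pi.sub_apply, sub_nonneg]
    exact (hm _ _ (hpos k) (hpos l)).2.2
  · rw [sub_sub_sub_cancel_left, weightedGram_sub]
    refine posSemidef_weightedGram (fun k l ↦ ?_) A₀
    simp only [Pi.sub_apply, sub_nonneg]
    exact (hm _ _ (hpos k) (hpos l)).2.1

/-- If `0 < m ≤ m' ≤ (x+y)/2` pointwise on positives, then
`det G(m') ≤ det G(m)`: the quantum-Fisher Gram determinant is antitone in the mean.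
(In the paper's notation: `f̃ ≤ g̃` implies `V(f) ≥ V(g)`.) -/
theorem det_fisher_antitone
    (n N : ℕ) (hn : 1 ≤ n) (hN : 1 ≤ N)
    (lam : Fin n → ℝ) (hpos : ∀ k, 0 < lam k) (hsum : ∑ k, lam k = 1)
    (A : Fin N → Matrix (Fin n) (Fin n) ℂ) (hA : ∀ h, (A h).IsHermitian)
    (m m' : ℝ → ℝ → ℝ)
    (hm : ∀ x y : ℝ, 0 < x → 0 < y →
      0 < m x y ∧ m x y ≤ m' x y ∧ m' x y ≤ (x + y) / 2)
    (ρ : Matrix (Fin n) (Fin n) ℂ)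
    (hρ : ρ = Matrix.diagonal fun k => (lam k : ℂ))
    (A₀ : Fin N → Matrix (Fin n) (Fin n) ℂ)
    (hA₀ : ∀ h, A₀ h = A h - (Matrix.trace (ρ * A h)) • (1 : Matrix (Fin n) (Fin n) ℂ))
    (Cov : Matrix (Fin N) (Fin N) ℝ)
    (hCov : ∀ h j, Cov h j = (Matrix.trace (ρ * A₀ h * A₀ j)).re)
    (G G' : Matrix (Fin N) (Fin N) ℝ)
    (hG : ∀ h j, G h j = Cov h j -
      ∑ k, ∑ l, m (lam k) (lam l) * (A₀ h k l * (starRingEnd ℂ) (A₀ j k l)).re)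
    (hG' : ∀ h j, G' h j = Cov h j -
      ∑ k, ∑ l, m' (lam k) (lam l) * (A₀ h k l * (starRingEnd ℂ) (A₀ j k l)).re) :
    G'.det ≤ G.det :=
  det_fisher_antitone_general n N lam hpos A hA m m' hm ρ hρ A₀ hA₀ Cov hCov G G' hG hG'
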